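/- arXiv:1309.3035 — 2 statements merged into one kernel-verified Lean document; each statement's English description precedes it below -/
import Mathlib

section
/- For K > 0 and complex numbers w₁, w₂ with Re(w₁) > 0 and Re(w₂) > 0, the two-dimensional Mellin transform of the basket put payoff (x,y) ↦ max(K - x - y, 0) equals B(w₁, w₂) · K^(w₁+w₂+1) / ((w₁+w₂)(w₁+w₂+1)), where B(w₁,w₂) = Γ(w₁)Γ(w₂)/Γ(w₁+w₂) is the Beta function. That is, ∫_0^∞ ∫_0^∞ max(K - x - y, 0) x^(w₁-1) y^(w₂-1) dx dy = (Γ(w₁)Γ(w₂)/Γ(w₁+w₂)) · K^(w₁+w₂+1) / ((w₁+w₂)(w₁+w₂+1)). -/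
open MeasureTheory Complex

/-- If `f` vanishes beyond `c > 0`, the integral over `Ioi 0` equals the interval
integral from `0` to `c`. -/
lemma cutoff_integral {c : ℝ} (hc : 0 < c) (f : ℝ → ℂ) (h0 : ∀ x, c < x → f x = 0) :
    ∫ x in Set.Ioi (0:ℝ), f x = ∫ x in (0:ℝ)..c, f x := by
  rw [intervalIntegral.integral_of_le hc.le]
  have h1 : ∫ x in Set.Ioi (0:ℝ), f x
      = ∫ x in Set.Ioi (0:ℝ), (Set.Ioc (0:ℝ) c).indicator f x := by
    refine setIntegral_congr_fun measurableSet_Ioi (fun x hx => ?_)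
    by_cases hxc : x ≤ c
    · rw [Set.indicator_of_mem (Set.mem_Ioc.mpr ⟨Set.mem_Ioi.mp hx, hxc⟩)]
    · rw [Set.indicator_of_notMem (fun h => hxc h.2), h0 x (not_le.mp hxc)]
  rw [h1, setIntegral_indicator measurableSet_Ioc,
    Set.inter_eq_right.mpr Set.Ioc_subset_Ioi_self]

theorem basket_put_mellin_two (K : ℝ) (hK : 0 < K) (w₁ w₂ : ℂ)
    (hw₁ : 0 < w₁.re) (hw₂ : 0 < w₂.re) :
    ∫ y in Set.Ioi (0:ℝ), ∫ x in Set.Ioi (0:ℝ),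
        ((max (K - x - y) 0 : ℝ) : ℂ) * (x : ℂ) ^ (w₁ - 1) * (y : ℂ) ^ (w₂ - 1)
      = (Complex.Gamma w₁ * Complex.Gamma w₂ / Complex.Gamma (w₁ + w₂)) *
          (K : ℂ) ^ (w₁ + w₂ + 1) / ((w₁ + w₂) * (w₁ + w₂ + 1)) := by
  have hw₁0 : w₁ ≠ 0 := fun h => by simp [h] at hw₁
  have hw₁1 : w₁ + 1 ≠ 0 := fun h => by
    have := congrArg Complex.re h; simp at this; linarith
  have hws : w₁ + w₂ ≠ 0 := fun h => by
    have := congrArg Complex.re h; simp [Complex.add_re] at this; linarith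
  have hws1 : w₁ + w₂ + 1 ≠ 0 := fun h => by
    have := congrArg Complex.re h; simp [Complex.add_re] at this; linarith
  set β₁ : ℂ := Complex.betaIntegral w₁ 2 with hβ₁
  set β₂ : ℂ := Complex.betaIntegral w₂ (w₁ + 2) with hβ₂
  set g : ℝ → ℂ := fun y =>
    ((max (K - y) 0 : ℝ) : ℂ) ^ (w₁ + 1) * β₁ * (y : ℂ) ^ (w₂ - 1) with hg
  -- Step 1: compute the inner integral
  have hinner : ∀ y ∈ Set.Ioi (0:ℝ),
      (∫ x in Set.Ioi (0:ℝ),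
        ((max (K - x - y) 0 : ℝ) : ℂ) * (x : ℂ) ^ (w₁ - 1) * (y : ℂ) ^ (w₂ - 1)) = g y := by
    intro y hy
    rw [Set.mem_Ioi] at hy
    by_cases hyK : y < K
    · have hc : 0 < K - y := by linarith
      rw [cutoff_integral hc _ (fun x hx => by
        rw [max_eq_right (by linarith : K - x - y ≤ 0)]
        simp)]
      have hcongr : ∫ x in (0:ℝ)..(K - y),
            ((max (K - x - y) 0 : ℝ) : ℂ) * (x : ℂ) ^ (w₁ - 1) * (y : ℂ) ^ (w₂ - 1)
          = ∫ x in (0:ℝ)..(K - y),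
            ((x : ℂ) ^ (w₁ - 1) * (((K - y : ℝ) : ℂ) - x) ^ ((2:ℂ) - 1)) * (y : ℂ) ^ (w₂ - 1) := by
        rw [intervalIntegral.integral_of_le hc.le, intervalIntegral.integral_of_le hc.le]
        refine setIntegral_congr_fun measurableSet_Ioc (fun x hx => ?_)
        have hx1 : 0 < x := hx.1
        have hx2 : x ≤ K - y := hx.2
        rw [max_eq_left (by linarith : (0:ℝ) ≤ K - x - y)]
        have : ((K - x - y : ℝ) : ℂ) = ((K - y : ℝ) : ℂ) - (x : ℂ) := by push_cast; ring
        rw [this, show (2:ℂ) - 1 = 1 by norm_num, Complex.cpow_one]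
        ring
      rw [hcongr, intervalIntegral.integral_mul_const,
        Complex.betaIntegral_scaled w₁ 2 hc]
      rw [hg]
      simp only []
      rw [max_eq_left (by linarith : (0:ℝ) ≤ K - y)]
      congr 2
      · congr 1
        ring
    · have hzero : ∀ x ∈ Set.Ioi (0:ℝ),
          ((max (K - x - y) 0 : ℝ) : ℂ) * (x : ℂ) ^ (w₁ - 1) * (y : ℂ) ^ (w₂ - 1) = 0 := by
        intro x hx
        rw [Set.mem_Ioi] at hx
        rw [max_eq_right (by linarith : K - x - y ≤ 0)]
        simp
      rw [setIntegral_congr_fun measurableSet_Ioi hzero, integral_zero, hg]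
      simp only []
      rw [max_eq_right (by linarith : K - y ≤ 0)]
      rw [Complex.ofReal_zero, Complex.zero_cpow hw₁1, zero_mul, zero_mul]
  rw [setIntegral_congr_fun measurableSet_Ioi hinner]
  -- Step 2: compute the outer integral
  have houter : ∫ y in Set.Ioi (0:ℝ), g y
      = ((K:ℂ) ^ (w₂ + (w₁ + 2) - 1) * β₂) * β₁ := by
    rw [cutoff_integral hK g (fun y hy => by
      rw [hg]; simp only []
      rw [max_eq_right (by linarith : K - y ≤ 0)]
      rw [Complex.ofReal_zero, Complex.zero_cpow hw₁1, zero_mul, zero_mul])]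
    have hcongr : ∫ y in (0:ℝ)..K, g y
        = ∫ y in (0:ℝ)..K, ((y : ℂ) ^ (w₂ - 1) * (((K:ℝ) : ℂ) - y) ^ ((w₁ + 2) - 1)) * β₁ := by
      rw [intervalIntegral.integral_of_le hK.le, intervalIntegral.integral_of_le hK.le]
      refine setIntegral_congr_fun measurableSet_Ioc (fun y hy => ?_)
      rw [hg]; simp only []
      rw [max_eq_left (by linarith [hy.2] : (0:ℝ) ≤ K - y)]
      have : ((K - y : ℝ) : ℂ) = ((K:ℝ) : ℂ) - (y : ℂ) := by push_cast; ring
      rw [this]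
      have : (w₁ + 2 - 1 : ℂ) = w₁ + 1 := by ring
      rw [this]
      ring
    rw [hcongr, intervalIntegral.integral_mul_const,
      Complex.betaIntegral_scaled w₂ (w₁ + 2) hK]
  rw [houter]
  -- Step 3: algebra with Gamma functions
  have h2re : (0:ℝ) < (2:ℂ).re := by norm_num
  have h12re : (0:ℝ) < (w₁ + 2).re := by simp [Complex.add_re]; linarith
  have e1 := Complex.Gamma_mul_Gamma_eq_betaIntegral hw₁ h2re
  have e2 := Complex.Gamma_mul_Gamma_eq_betaIntegral hw₂ h12re
  rw [← hβ₁] at e1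
  rw [← hβ₂] at e2
  have hΓ2 : Complex.Gamma 2 = 1 := by
    have : (2:ℂ) = 1 + 1 := by norm_num
    rw [this, Complex.Gamma_add_one 1 one_ne_zero, Complex.Gamma_one, one_mul]
  have hΓ12 : Complex.Gamma (w₁ + 2) = (w₁ + 1) * (w₁ * Complex.Gamma w₁) := by
    have h : w₁ + 2 = (w₁ + 1) + 1 := by ring
    rw [h, Complex.Gamma_add_one _ hw₁1, Complex.Gamma_add_one _ hw₁0]
  have hΓs2 : Complex.Gamma (w₂ + (w₁ + 2)) =
      (w₁ + w₂ + 1) * ((w₁ + w₂) * Complex.Gamma (w₁ + w₂)) := by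
    have h : w₂ + (w₁ + 2) = ((w₁ + w₂) + 1) + 1 := by ring
    rw [h, Complex.Gamma_add_one _ hws1, Complex.Gamma_add_one _ hws]
  rw [hΓ2, mul_one, hΓ12] at e1
  rw [hΓ12, hΓs2] at e2
  have hE : (K:ℂ) ^ (w₂ + (w₁ + 2) - 1) = (K:ℂ) ^ (w₁ + w₂ + 1) := by
    congr 1; ring
  rw [hE]
  have hΓ1 := Complex.Gamma_ne_zero_of_re_pos hw₁
  have hΓw2 := Complex.Gamma_ne_zero_of_re_pos hw₂
  have hΓs : Complex.Gamma (w₁ + w₂) ≠ 0 := by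
    apply Complex.Gamma_ne_zero_of_re_pos; simp [Complex.add_re]; linarith
  have hβ₁val : β₁ = 1 / ((w₁ + 1) * w₁) := by
    have h1 : Complex.Gamma w₁ * 1 = Complex.Gamma w₁ * (((w₁ + 1) * w₁) * β₁) := by
      linear_combination e1
    have h2 := mul_left_cancel₀ hΓ1 h1
    rw [eq_div_iff (mul_ne_zero hw₁1 hw₁0)]
    linear_combination -h2
  have hβ₂val : β₂ = Complex.Gamma w₂ * ((w₁ + 1) * (w₁ * Complex.Gamma w₁)) /
      ((w₁ + w₂ + 1) * ((w₁ + w₂) * Complex.Gamma (w₁ + w₂))) := by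
    rw [eq_div_iff (mul_ne_zero hws1 (mul_ne_zero hws hΓs))]
    linear_combination -e2
  clear_value β₁ β₂
  rw [hβ₁val, hβ₂val]
  field_simp
end

section
/- For K > 0, n ≥ 1, and complex numbers w₁, …, wₙ each with positive real part, the n-dimensional Mellin transform of the basket put payoff (x₁,…,xₙ) ↦ max(K - Σⱼ xⱼ, 0) equals βₙ(w) · K^(1+Σw) / ((Σw)(1+Σw)), where Σw = Σⱼ wⱼ and βₙ(w) = (∏ⱼ Γ(wⱼ)) / Γ(Σⱼ wⱼ) is the multinomial Beta function. -/
open MeasureTheory Complex Set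

noncomputable def Ff (n : ℕ) (p : ℂ) (w : Fin n → ℂ) (c : ℝ) : (Fin n → ℝ) → ℂ :=
  fun x => ((max (c - ∑ j, x j) 0 : ℝ) : ℂ) ^ p * ∏ j, (x j : ℂ) ^ (w j - 1)

noncomputable def Gf (n : ℕ) (p : ℂ) (w : Fin (n+1) → ℂ) (c : ℝ) : ℝ × (Fin n → ℝ) → ℂ :=
  fun z => ((((max ((c - ∑ j, z.2 j) - z.1) 0 : ℝ)) : ℂ) ^ p * (z.1 : ℂ) ^ (w 0 - 1)) *
    ∏ j, (z.2 j : ℂ) ^ (w j.succ - 1)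

lemma oneDim {p w : ℂ} (hp : 0 < p.re) (hw : 0 < w.re) (c : ℝ) :
    IntegrableOn (fun t : ℝ => ((max (c - t) 0 : ℝ) : ℂ) ^ p * (t : ℂ) ^ (w - 1)) (Ioi 0) volume
    ∧ ∫ t in Ioi (0:ℝ), ((max (c - t) 0 : ℝ) : ℂ) ^ p * (t : ℂ) ^ (w - 1)
        = Gamma w * Gamma (p + 1) / Gamma (w + p + 1) * ((max c 0 : ℝ) : ℂ) ^ (p + w) := by
  have hp0 : p ≠ 0 := fun h => by simp [h] at hp
  have hpw0 : p + w ≠ 0 := fun h => by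
    have : (p + w).re = 0 := by rw [h]; simp
    simp only [add_re] at this; linarith
  by_cases hc : 0 < c
  · -- main case
    have hF : ∀ t ∈ Ioc 0 c, ((max (c - t) 0 : ℝ) : ℂ) ^ p * (t : ℂ) ^ (w - 1)
        = (t : ℂ) ^ (w - 1) * ((c : ℂ) - t) ^ ((p + 1) - 1) := by
      intro t ht
      rw [max_eq_left (by linarith [ht.2] : (0:ℝ) ≤ c - t), ofReal_sub, mul_comm,
        add_sub_cancel_right]
    have hzero : ∀ t ∈ Ioi c, ((max (c - t) 0 : ℝ) : ℂ) ^ p * (t : ℂ) ^ (w - 1) = 0 := by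
      intro t ht
      rw [max_eq_right (by linarith [mem_Ioi.mp ht] : c - t ≤ 0), ofReal_zero, zero_cpow hp0,
        zero_mul]
    -- interval integrability of the beta-type integrand
    have hInt : IntervalIntegrable
        (fun x : ℝ => (x : ℂ) ^ (w - 1) * ((c : ℂ) - x) ^ ((p + 1) - 1)) volume 0 c := by
      have h2 : (0:ℝ) < c / 2 := by linarith
      have hA : IntervalIntegrable
          (fun x : ℝ => (x : ℂ) ^ (w - 1) * ((c : ℂ) - x) ^ ((p + 1) - 1)) volume 0 (c/2) := by
        apply IntervalIntegrable.mul_continuousOn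
        · exact intervalIntegral.intervalIntegrable_cpow' (by simpa using hw)
        · intro x hx
          rw [uIcc_of_le h2.le] at hx
          refine ContinuousAt.continuousWithinAt (ContinuousAt.cpow
            ((continuous_const.sub continuous_ofReal).continuousAt) continuousAt_const ?_)
          norm_cast
          exact ofReal_mem_slitPlane.2 (by linarith [hx.2])
      have hB : IntervalIntegrable
          (fun x : ℝ => (x : ℂ) ^ (w - 1) * ((c : ℂ) - x) ^ ((p + 1) - 1)) volume (c/2) c := by
        have hf : IntervalIntegrable (fun x : ℝ => ((c - x : ℝ) : ℂ) ^ ((p + 1) - 1))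
            volume (c/2) c := by
          have := (intervalIntegral.intervalIntegrable_cpow' (r := (p+1)-1)
            (by simp only [sub_re, add_re, one_re]; linarith) (a := c/2) (b := 0)).comp_sub_left c
          simpa [sub_half] using this
        have hf' : IntervalIntegrable (fun x : ℝ => ((c : ℂ) - x) ^ ((p + 1) - 1))
            volume (c/2) c := by
          simpa only [ofReal_sub] using hf
        apply hf'.continuousOn_mul
        intro x hx
        rw [uIcc_of_le (by linarith : c/2 ≤ c)] at hx
        refine (Complex.continuousAt_ofReal_cpow_const x _ (Or.inr ?_)).continuousWithinAt
        exact ne_of_gt (lt_of_lt_of_le h2 hx.1)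
      exact hA.trans hB
    have hIoc : IntegrableOn (fun t : ℝ => ((max (c - t) 0 : ℝ) : ℂ) ^ p * (t : ℂ) ^ (w - 1))
        (Ioc 0 c) volume := by
      refine IntegrableOn.congr_fun ?_ (fun t ht => (hF t ht).symm) measurableSet_Ioc
      exact (intervalIntegrable_iff_integrableOn_Ioc_of_le hc.le).mp hInt
    have hIoi : IntegrableOn (fun t : ℝ => ((max (c - t) 0 : ℝ) : ℂ) ^ p * (t : ℂ) ^ (w - 1))
        (Ioi c) volume := by
      refine IntegrableOn.congr_fun (integrableOn_zero) (fun t ht => (hzero t ht).symm)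
        measurableSet_Ioi
    have hIntOn : IntegrableOn (fun t : ℝ => ((max (c - t) 0 : ℝ) : ℂ) ^ p * (t : ℂ) ^ (w - 1))
        (Ioi 0) volume := by
      rw [← Ioc_union_Ioi_eq_Ioi hc.le]
      exact hIoc.union hIoi
    refine ⟨hIntOn, ?_⟩
    rw [← Ioc_union_Ioi_eq_Ioi hc.le,
      setIntegral_union (Ioc_disjoint_Ioi le_rfl) measurableSet_Ioi hIoc hIoi]
    rw [setIntegral_congr_fun measurableSet_Ioi hzero, integral_zero, add_zero]
    rw [setIntegral_congr_fun measurableSet_Ioc hF, ← intervalIntegral.integral_of_le hc.le,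
      Complex.betaIntegral_scaled w (p+1) hc]
    have hbeta : Complex.betaIntegral w (p + 1)
        = Gamma w * Gamma (p + 1) / Gamma (w + p + 1) := by
      have h := Complex.Gamma_mul_Gamma_eq_betaIntegral hw
        (by simp only [add_re, one_re]; linarith : 0 < (p+1).re)
      have hne : Gamma (w + (p + 1)) ≠ 0 :=
        Complex.Gamma_ne_zero_of_re_pos (by simp only [add_re, one_re]; linarith)
      rw [eq_div_iff (by rwa [show w + p + 1 = w + (p+1) by ring])]
      rw [show w + p + 1 = w + (p+1) by ring, mul_comm (Complex.betaIntegral w (p+1)) _]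
      exact h.symm
    rw [hbeta, max_eq_left hc.le]
    rw [show w + (p + 1) - 1 = p + w by ring]
    ring
  · -- degenerate case c ≤ 0
    push_neg at hc
    have hzero : ∀ t ∈ Ioi (0:ℝ), ((max (c - t) 0 : ℝ) : ℂ) ^ p * (t : ℂ) ^ (w - 1) = 0 := by
      intro t ht
      rw [max_eq_right (by linarith [mem_Ioi.mp ht] : c - t ≤ 0), ofReal_zero, zero_cpow hp0,
        zero_mul]
    constructor
    · exact IntegrableOn.congr_fun integrableOn_zero (fun t ht => (hzero t ht).symm)
        measurableSet_Ioi
    · rw [setIntegral_congr_fun measurableSet_Ioi hzero, integral_zero,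
        max_eq_right hc, ofReal_zero, zero_cpow hpw0, mul_zero]


lemma norm_cpow_base_nonneg {m : ℝ} (hm : 0 ≤ m) {p : ℂ} (hp : 0 < p.re) :
    ‖((m : ℝ) : ℂ) ^ p‖ = m ^ p.re := by
  rcases hm.eq_or_lt with h | h
  · rw [← h, ofReal_zero, zero_cpow (fun h0 => by simp [h0] at hp), norm_zero,
      Real.zero_rpow (ne_of_gt hp)]
  · rw [Complex.norm_cpow_eq_rpow_re_of_pos h]

lemma oneDimReal {q a : ℝ} (hq : 0 < q) (ha : 0 < a) (c : ℝ) :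
    IntegrableOn (fun t : ℝ => (max (c - t) 0) ^ q * t ^ (a - 1)) (Ioi 0) volume
    ∧ ∫ t in Ioi (0:ℝ), (max (c - t) 0) ^ q * t ^ (a - 1)
      = Real.Gamma a * Real.Gamma (q + 1) / Real.Gamma (a + q + 1) * (max c 0) ^ (q + a) := by
  obtain ⟨hi, hv⟩ := oneDim (p := (q:ℂ)) (w := (a:ℂ)) (by simpa using hq) (by simpa using ha) c
  have heq : ∀ t ∈ Ioi (0:ℝ),
      ((max (c - t) 0 : ℝ) : ℂ) ^ (q:ℂ) * (t : ℂ) ^ ((a:ℂ) - 1)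
        = (((max (c - t) 0) ^ q * t ^ (a - 1) : ℝ) : ℂ) := by
    intro t ht
    rw [ofReal_mul, ← Complex.ofReal_cpow (le_max_right _ _) q,
      show ((a:ℂ) - 1) = ((a - 1 : ℝ) : ℂ) by push_cast; ring,
      ← Complex.ofReal_cpow (le_of_lt (mem_Ioi.mp ht))]
  have hi' : IntegrableOn (fun t : ℝ => (((max (c - t) 0) ^ q * t ^ (a - 1) : ℝ) : ℂ))
      (Ioi 0) volume := hi.congr_fun heq measurableSet_Ioi
  constructor
  · have := hi'.re
    refine this.congr (Filter.Eventually.of_forall fun t => ?_)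
    simp
  · have hval : (((∫ t in Ioi (0:ℝ), (max (c - t) 0) ^ q * t ^ (a - 1)) : ℝ) : ℂ)
        = Gamma (a:ℂ) * Gamma ((q:ℂ) + 1) / Gamma ((a:ℂ) + (q:ℂ) + 1)
          * ((max c 0 : ℝ) : ℂ) ^ ((q:ℂ) + (a:ℂ)) := by
      rw [show ((((∫ t in Ioi (0:ℝ), (max (c - t) 0) ^ q * t ^ (a - 1)) : ℝ)) : ℂ)
          = ∫ t in Ioi (0:ℝ), (((max (c - t) 0) ^ q * t ^ (a - 1) : ℝ) : ℂ) from
          integral_ofReal.symm,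
        ← setIntegral_congr_fun measurableSet_Ioi heq, hv]
    rw [show ((a:ℂ) + (q:ℂ) + 1) = ((a + q + 1 : ℝ) : ℂ) by push_cast; ring,
      show ((q:ℂ) + 1) = ((q + 1 : ℝ) : ℂ) by push_cast; ring,
      show ((q:ℂ) + (a:ℂ)) = ((q + a : ℝ) : ℂ) by push_cast; ring,
      Complex.Gamma_ofReal, Complex.Gamma_ofReal, Complex.Gamma_ofReal,
      ← Complex.ofReal_cpow (le_max_right _ _)] at hval
    have := hval
    rw [show (((Real.Gamma a) : ℂ) * ((Real.Gamma (q+1)) : ℂ) / ((Real.Gamma (a+q+1)) : ℂ)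
        * (((max c 0) ^ (q + a) : ℝ) : ℂ))
      = (((Real.Gamma a * Real.Gamma (q+1) / Real.Gamma (a+q+1) * (max c 0) ^ (q+a) : ℝ)) : ℂ)
      by push_cast; ring] at this
    exact_mod_cast this


lemma measurable_cpow_aux {α : Type*} [MeasurableSpace α] {f g : α → ℂ}
    (hf : Measurable f) (hg : Measurable g) : Measurable fun x => f x ^ g x := by
  simp_rw [Complex.cpow_def]
  refine Measurable.ite (hf (measurableSet_singleton 0)) ?_ ((hf.clog.mul hg).cexp)
  exact Measurable.ite (hg (measurableSet_singleton 0)) measurable_const measurable_const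

lemma measF (n : ℕ) (p : ℂ) (w : Fin n → ℂ) (c : ℝ) : Measurable (Ff n p w c) := by
  apply Measurable.mul
  · refine measurable_cpow_aux (measurable_ofReal.comp ?_) measurable_const
    exact ((measurable_const.sub (Finset.measurable_sum _
      fun j _ => measurable_pi_apply j)).max measurable_const)
  · exact Finset.measurable_prod _ fun j _ =>
      measurable_cpow_aux (measurable_ofReal.comp (measurable_pi_apply j)) measurable_const

lemma nu_eq (n : ℕ) : (volume : Measure (Fin n → ℝ)).restrict {x | ∀ j, 0 < x j}
    = Measure.pi (fun _ : Fin n => volume.restrict (Ioi (0:ℝ))) := by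
  refine (Measure.pi_eq fun s hs => ?_).symm
  have hset : {x : Fin n → ℝ | ∀ j, 0 < x j} = Set.pi univ (fun _ => Ioi 0) := by
    ext x; simp [Set.mem_pi]
  rw [Measure.restrict_apply (MeasurableSet.univ_pi hs), hset, ← Set.pi_inter_distrib,
    volume_pi_pi]
  exact Finset.prod_congr rfl fun j _ => (Measure.restrict_apply (hs j)).symm

lemma ae_pos (n : ℕ) :
    ∀ᵐ y ∂(Measure.pi fun _ : Fin n => volume.restrict (Ioi (0:ℝ))), ∀ j, 0 < y j := by
  rw [← nu_eq]
  have hset : {x : Fin n → ℝ | ∀ j, 0 < x j} = Set.pi univ (fun _ => Ioi 0) := by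
    ext x; simp [Set.mem_pi]
  have hs : MeasurableSet {x : Fin n → ℝ | ∀ j, 0 < x j} := by
    rw [hset]; exact MeasurableSet.univ_pi fun _ => measurableSet_Ioi
  exact ae_restrict_mem hs

lemma hGF (n : ℕ) (p : ℂ) (w : Fin (n+1) → ℂ) (c : ℝ) :
    (Ff (n+1) p w c ∘ (MeasurableEquiv.piFinSuccAbove (fun _ : Fin (n+1) => ℝ) 0).symm)
      = Gf n p w c := by
  funext z
  simp only [Ff, Gf, Function.comp_apply, MeasurableEquiv.piFinSuccAbove_symm_apply,
    Fin.insertNthEquiv, Equiv.coe_fn_mk, Fin.insertNth_zero]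
  rw [Fin.sum_univ_succ, Fin.prod_univ_succ]
  simp only [Fin.cons_zero, Fin.cons_succ, Fin.zero_succAbove, cast_eq]
  rw [show c - (z.1 + ∑ j, z.2 j) = (c - ∑ j, z.2 j) - z.1 by ring]
  ring

lemma master (n : ℕ) (p : ℂ) (hp : 0 < p.re) (w : Fin n → ℂ) (hw : ∀ j, 0 < (w j).re) (c : ℝ) :
    Integrable (Ff n p w c) (Measure.pi fun _ : Fin n => volume.restrict (Ioi (0:ℝ)))
    ∧ ∫ x, Ff n p w c x ∂(Measure.pi fun _ : Fin n => volume.restrict (Ioi (0:ℝ)))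
      = Gamma (p + 1) * (∏ j, Gamma (w j)) / Gamma (p + 1 + ∑ j, w j)
          * ((max c 0 : ℝ) : ℂ) ^ (p + ∑ j, w j) := by
  induction n generalizing p with
  | zero =>
    have h1 : Ff 0 p w c = fun _ => ((max c 0 : ℝ) : ℂ) ^ p := by
      funext x; simp [Ff]
    rw [h1, Measure.pi_of_empty]
    have hne : Gamma (p + 1) ≠ 0 := Complex.Gamma_ne_zero_of_re_pos (by simp; linarith)
    constructor
    · exact integrable_const _
    · simp [integral_dirac, hne]
  | succ n ih =>
    have hw0 : 0 < (w 0).re := hw 0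
    have hpw0 : 0 < (p + w 0).re := by simp only [add_re]; linarith
    have mp : MeasurePreserving
        (MeasurableEquiv.piFinSuccAbove (fun _ : Fin (n+1) => ℝ) 0).symm
        ((volume.restrict (Ioi (0:ℝ))).prod
          (Measure.pi fun _ : Fin n => volume.restrict (Ioi (0:ℝ))))
        (Measure.pi fun _ : Fin (n+1) => volume.restrict (Ioi (0:ℝ))) :=
      (measurePreserving_piFinSuccAbove (fun _ : Fin (n+1) => volume.restrict (Ioi (0:ℝ))) 0).symm
    have hmeasG : AEStronglyMeasurable (Gf n p w c)
        ((volume.restrict (Ioi (0:ℝ))).prod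
          (Measure.pi fun _ : Fin n => volume.restrict (Ioi (0:ℝ)))) := by
      rw [← hGF]
      exact ((measF (n+1) p w c).comp
        (MeasurableEquiv.piFinSuccAbove (fun _ : Fin (n+1) => ℝ) 0).symm.measurable
        ).aestronglyMeasurable
    have hInt : Integrable (Gf n p w c)
        ((volume.restrict (Ioi (0:ℝ))).prod
          (Measure.pi fun _ : Fin n => volume.restrict (Ioi (0:ℝ)))) := by
      rw [integrable_prod_iff' hmeasG]
      constructor
      · refine Filter.Eventually.of_forall fun y => ?_
        have hfe : (fun t : ℝ => Gf n p w c (t, y)) = fun t : ℝ =>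
            ((((max ((c - ∑ j, y j) - t) 0 : ℝ)) : ℂ) ^ p * (t : ℂ) ^ (w 0 - 1)) *
              ∏ j, (y j : ℂ) ^ (w j.succ - 1) := rfl
        rw [hfe]
        exact ((oneDim hp hw0 (c - ∑ j, y j)).1).mul_const _
      · have hnormint : ∀ y : Fin n → ℝ,
            ∫ t, ‖Gf n p w c (t, y)‖ ∂(volume.restrict (Ioi (0:ℝ)))
            = (Real.Gamma ((w 0).re) * Real.Gamma (p.re + 1) / Real.Gamma ((w 0).re + p.re + 1)
                * (max (c - ∑ j, y j) 0) ^ (p.re + (w 0).re))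
              * ‖∏ j, ((y j : ℂ) ^ (w j.succ - 1))‖ := by
          intro y
          have heq : ∀ t ∈ Ioi (0:ℝ), ‖Gf n p w c (t, y)‖
              = ((max ((c - ∑ j, y j) - t) 0) ^ p.re * t ^ ((w 0).re - 1))
                * ‖∏ j, ((y j : ℂ) ^ (w j.succ - 1))‖ := by
            intro t ht
            simp only [Gf, norm_mul]
            rw [norm_cpow_base_nonneg (le_max_right _ _) hp,
              Complex.norm_cpow_eq_rpow_re_of_pos (mem_Ioi.mp ht),
              sub_re, one_re]
          rw [setIntegral_congr_fun measurableSet_Ioi heq, integral_mul_const,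
            (oneDimReal hp hw0 (c - ∑ j, y j)).2]
        simp_rw [hnormint]
        have hIH := (ih ((p.re + (w 0).re : ℝ) : ℂ) (by simpa using hpw0)
          (fun j => (((w j.succ).re : ℝ) : ℂ)) (fun j => by simpa using hw j.succ)).1
        have hnorm := hIH.norm
        refine (hnorm.const_mul (Real.Gamma ((w 0).re) * Real.Gamma (p.re + 1)
          / Real.Gamma ((w 0).re + p.re + 1))).congr ?_
        filter_upwards [ae_pos n] with y hy
        have h1 : ‖Ff n (((p.re + (w 0).re : ℝ) : ℂ)) (fun j => (((w j.succ).re : ℝ) : ℂ)) c y‖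
            = (max (c - ∑ j, y j) 0) ^ (p.re + (w 0).re)
              * ‖∏ j, ((y j : ℂ) ^ (w j.succ - 1))‖ := by
          simp only [Ff, norm_mul]
          rw [norm_cpow_base_nonneg (le_max_right _ _) (by simpa using hpw0), ofReal_re]
          congr 1
          rw [norm_prod, norm_prod]
          refine Finset.prod_congr rfl fun j _ => ?_
          rw [Complex.norm_cpow_eq_rpow_re_of_pos (hy j),
            Complex.norm_cpow_eq_rpow_re_of_pos (hy j)]
          congr 1 <;> simp
        rw [h1]
        ring
    have hIntF : Integrable (Ff (n+1) p w c)
        (Measure.pi fun _ : Fin (n+1) => volume.restrict (Ioi (0:ℝ))) := by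
      rw [← mp.integrable_comp_emb
        (MeasurableEquiv.piFinSuccAbove (fun _ : Fin (n+1) => ℝ) 0).symm.measurableEmbedding,
        hGF]
      exact hInt
    refine ⟨hIntF, ?_⟩
    have hval : ∫ x, Ff (n+1) p w c x
          ∂(Measure.pi fun _ : Fin (n+1) => volume.restrict (Ioi (0:ℝ)))
        = ∫ z, Gf n p w c z ∂((volume.restrict (Ioi (0:ℝ))).prod
            (Measure.pi fun _ : Fin n => volume.restrict (Ioi (0:ℝ)))) := by
      rw [← mp.integral_comp
        (MeasurableEquiv.piFinSuccAbove (fun _ : Fin (n+1) => ℝ) 0).symm.measurableEmbedding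
        (Ff (n+1) p w c)]
      exact integral_congr_ae (Filter.Eventually.of_forall fun z => congrFun (hGF n p w c) z)
    rw [hval, integral_prod_symm (Gf n p w c) hInt]
    have hinner : ∀ y : Fin n → ℝ,
        ∫ t, Gf n p w c (t, y) ∂(volume.restrict (Ioi (0:ℝ)))
        = (Gamma (w 0) * Gamma (p + 1) / Gamma (w 0 + p + 1)) *
          (((max (c - ∑ j, y j) 0 : ℝ) : ℂ) ^ (p + w 0) * ∏ j, (y j : ℂ) ^ (w j.succ - 1)) := by
      intro y
      have hfe : (fun t : ℝ => Gf n p w c (t, y)) = fun t : ℝ =>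
          (((max ((c - ∑ j, y j) - t) 0 : ℝ) : ℂ) ^ p * (t : ℂ) ^ (w 0 - 1)) *
            ∏ j, (y j : ℂ) ^ (w j.succ - 1) := rfl
      rw [hfe, integral_mul_const, (oneDim hp hw0 (c - ∑ j, y j)).2, mul_assoc]
    simp_rw [hinner]
    have hIH2 := (ih (p + w 0) hpw0 (fun j => w j.succ) (fun j => hw j.succ)).2
    have hFfe : (fun y : Fin n → ℝ =>
        ((max (c - ∑ j, y j) 0 : ℝ) : ℂ) ^ (p + w 0) * ∏ j, (y j : ℂ) ^ (w j.succ - 1))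
        = Ff n (p + w 0) (fun j => w j.succ) c := rfl
    rw [integral_const_mul, hFfe, hIH2]
    rw [Fin.prod_univ_succ, Fin.sum_univ_succ]
    rw [show p + w 0 + 1 + ∑ j : Fin n, w j.succ = p + 1 + (w 0 + ∑ j : Fin n, w j.succ) by ring,
      show p + w 0 + ∑ j : Fin n, w j.succ = p + (w 0 + ∑ j : Fin n, w j.succ) by ring,
      show w 0 + p + 1 = p + w 0 + 1 by ring]
    have hne1 : Gamma (p + w 0 + 1) ≠ 0 :=
      Complex.Gamma_ne_zero_of_re_pos (by simp only [add_re, one_re]; linarith)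
    have hne2 : Gamma (p + 1 + (w 0 + ∑ j : Fin n, w j.succ)) ≠ 0 := by
      refine Complex.Gamma_ne_zero_of_re_pos ?_
      have : 0 ≤ (∑ j : Fin n, w j.succ).re := by
        rw [Complex.re_sum]
        exact Finset.sum_nonneg fun j _ => (hw j.succ).le
      simp only [add_re, one_re]
      linarith
    field_simp


theorem basket_put_mellin (n : ℕ) (hn : 1 ≤ n) (K : ℝ) (hK : 0 < K)
    (w : Fin n → ℂ) (hw : ∀ j, 0 < (w j).re) :
    ∫ x in {x : Fin n → ℝ | ∀ j, 0 < x j},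
        ((max (K - ∑ j, x j) 0 : ℝ) : ℂ) * ∏ j, (x j : ℂ) ^ (w j - 1)
      = ((∏ j, Complex.Gamma (w j)) / Complex.Gamma (∑ j, w j)) *
          (K : ℂ) ^ (1 + ∑ j, w j) / ((∑ j, w j) * (1 + ∑ j, w j)) := by
  have h := (master n 1 (by norm_num) w hw K).2
  have hfun : (fun x : Fin n → ℝ =>
      ((max (K - ∑ j, x j) 0 : ℝ) : ℂ) * ∏ j, (x j : ℂ) ^ (w j - 1)) = Ff n 1 w K := by
    funext x
    simp only [Ff, cpow_one]
  rw [nu_eq n, hfun, h]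
  have hsre : 0 < (∑ j, w j).re := by
    rw [Complex.re_sum]
    refine Finset.sum_pos (fun j _ => hw j) ?_
    have : Nonempty (Fin n) := Fin.pos_iff_nonempty.mp hn
    exact Finset.univ_nonempty
  have hs0 : (∑ j, w j) ≠ 0 := fun h0 => by simp [h0] at hsre
  have hs1 : (∑ j, w j) + 1 ≠ 0 := fun h0 => by
    have := congrArg Complex.re h0
    simp only [add_re, one_re, zero_re] at this
    linarith
  have hG : Gamma (1 + 1 + ∑ j, w j)
      = ((∑ j, w j) + 1) * ((∑ j, w j) * Gamma (∑ j, w j)) := by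
    rw [show (1:ℂ) + 1 + ∑ j, w j = ((∑ j, w j) + 1) + 1 by ring,
      Complex.Gamma_add_one _ hs1, Complex.Gamma_add_one _ hs0]
  have hG2 : Gamma ((1:ℂ) + 1) = 1 := by
    rw [Complex.Gamma_add_one 1 one_ne_zero, Complex.Gamma_one, mul_one]
  rw [hG, hG2, max_eq_left hK.le]
  have hGs : Gamma (∑ j, w j) ≠ 0 := Complex.Gamma_ne_zero_of_re_pos hsre
  have hs1' : (1:ℂ) + ∑ j, w j ≠ 0 := by rwa [add_comm] at hs1
  field_simp
  ring_nf
end
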